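/- Fix h ∈ ℂ. On A = ℂ[x⁰,x¹,x²,x³] define the left realization x̂^μ_L := x^μ∘(1 − ih·∂₀) for μ = 0,1,2,3, and the right realization x̂^j_R := x^j for j = 1,2,3 and x̂⁰_R := x⁰∘(1 − ih·∂₀) − ih·Σ_{k=1}^{3} x^k∘∂_k. Then for every μ ∈ {0,1,2,3}: x̂^μ_L − x̂^μ_R = i·Σ_{ν=0}^{3} (a^μ x^ν − a^ν x^μ)∘∂_ν, where a := (h,0,0,0). -/
import Mathlib


open MvPolynomial

noncomputable section

/-- The multiplication-by-`x^μ` operator on `ℂ[x⁰,x¹,x²,x³]`. -/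
def Xop (μ : Fin 4) : Module.End ℂ (MvPolynomial (Fin 4) ℂ) :=
  LinearMap.mulLeft ℂ (X μ)

/-- The partial-derivative operator `∂_μ` on `ℂ[x⁰,x¹,x²,x³]`. -/
def Dop (μ : Fin 4) : Module.End ℂ (MvPolynomial (Fin 4) ℂ) :=
  (pderiv μ).toLinearMap

/-- The left realization `x̂^μ_L := x^μ∘(1 − ih·∂₀)`. -/
def xhatL (h : ℂ) (μ : Fin 4) : Module.End ℂ (MvPolynomial (Fin 4) ℂ) :=
  Xop μ * (1 - (Complex.I * h) • Dop 0)

/-- The right realization: `x̂⁰_R := x⁰∘(1 − ih·∂₀) − ih·Σ_{k=1}^{3} x^k∘∂_k` and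
`x̂^j_R := x^j` for `j = 1,2,3`. -/
def xhatR (h : ℂ) (μ : Fin 4) : Module.End ℂ (MvPolynomial (Fin 4) ℂ) :=
  if μ = 0 then
    Xop 0 * (1 - (Complex.I * h) • Dop 0)
      - (Complex.I * h) • ∑ k ∈ ({1, 2, 3} : Finset (Fin 4)), Xop k * Dop k
  else Xop μ

lemma keyAux (h : ℂ) (a b : Module.End ℂ (MvPolynomial (Fin 4) ℂ)) :
    a - (Complex.I * h) • (a * b) - a = Complex.I • (-(h • a) * b) := by
  rw [show -(h • a) = (-h) • a from (neg_smul h a).symm, smul_mul_assoc]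
  module

lemma case_gen (h : ℂ) (μ : Fin 4) :
    xhatL h μ - xhatR h μ
      = Complex.I •
          ∑ ν : Fin 4,
            ((![h, 0, 0, 0] : Fin 4 → ℂ) μ • Xop ν
                - (![h, 0, 0, 0] : Fin 4 → ℂ) ν • Xop μ) * Dop ν := by
  have hsum : (∑ k ∈ ({1, 2, 3} : Finset (Fin 4)), Xop k * Dop k)
      = Xop 1 * Dop 1 + Xop 2 * Dop 2 + Xop 3 * Dop 3 := by
    rw [Finset.sum_insert (by decide), Finset.sum_insert (by decide), Finset.sum_singleton]
    rw [add_assoc]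
  fin_cases μ <;>
    simp only [xhatL, xhatR, hsum, Fin.sum_univ_four, Fin.isValue, Fin.mk_one,
      Matrix.cons_val_zero, Matrix.cons_val_one, Matrix.head_cons,
      Matrix.cons_val_two, Matrix.tail_cons, Matrix.cons_val_three,
      show (⟨0, by norm_num⟩ : Fin 4) = 0 from rfl,
      show (⟨1, by norm_num⟩ : Fin 4) = 1 from rfl,
      show (⟨2, by norm_num⟩ : Fin 4) = 2 from rfl,
      show (⟨3, by norm_num⟩ : Fin 4) = 3 from rfl,
      if_pos rfl, if_neg (by decide : (1 : Fin 4) ≠ 0),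
      if_neg (by decide : (2 : Fin 4) ≠ 0), if_neg (by decide : (3 : Fin 4) ≠ 0),
      zero_smul, smul_zero, zero_mul, sub_zero, zero_sub, sub_self, ite_true, neg_zero, add_zero, smul_mul_assoc, neg_mul]
  case _ => module
  case _ => rw [mul_sub, mul_one, mul_smul_comm]; exact keyAux h _ _
  case _ => rw [mul_sub, mul_one, mul_smul_comm]; exact keyAux h _ _
  case _ => rw [mul_sub, mul_one, mul_smul_comm]; exact keyAux h _ _

/-- For the Jordanian twist with `r = −1`, the star-commutator is a vector-field action:
with `a = (h,0,0,0)`, for every `μ`,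
`x̂^μ_L − x̂^μ_R = i·Σ_ν (a^μ x^ν − a^ν x^μ)∘∂_ν`. -/
theorem star_commutator_vector_field (h : ℂ) :
    ∀ μ : Fin 4,
      xhatL h μ - xhatR h μ
        = Complex.I •
            ∑ ν : Fin 4,
              ((![h, 0, 0, 0] : Fin 4 → ℂ) μ • Xop ν
                  - (![h, 0, 0, 0] : Fin 4 → ℂ) ν • Xop μ) * Dop ν := by
  exact case_gen h

end
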